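/- arXiv:2010.10072 — 6 statements merged into one kernel-verified Lean document; each statement's English description precedes it below -/
import Mathlib

section
/- The function ρ(z) = 1 + arcsinh(z) is a convex univalent function on the unit disk: ρ is injective on 𝔻 = {z ∈ ℂ : |z| < 1}, and its image Ω_ρ = ρ '' 𝔻 is a convex subset of ℂ. -/
open Complex

/-- Principal branch of the complex inverse hyperbolic sine. -/
noncomputable def carcsinh (z : ℂ) : ℂ := Complex.log (z + (1 + z ^ 2) ^ ((1 : ℂ) / 2))

/-- The function `ρ(z) = 1 + arcsinh z`. -/
noncomputable def ρ (z : ℂ) : ℂ := 1 + carcsinh z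

/-- The open unit disk in `ℂ`. -/
def unitDisk : Set ℂ := {z : ℂ | ‖z‖ < 1}

lemma aux_sq_sqrt (a : ℂ) : ((a ^ ((1 : ℂ) / 2)) ^ 2) = a := by
  have h2 : ((1 : ℂ) / 2) = (((2 : ℕ) : ℂ))⁻¹ := by norm_num
  rw [h2]
  exact Complex.cpow_nat_inv_pow _ two_ne_zero

lemma aux_sinh_carcsinh (z : ℂ) : Complex.sinh (carcsinh z) = z := by
  rw [carcsinh]
  set s : ℂ := (1 + z ^ 2) ^ ((1 : ℂ) / 2) with hs
  have hsq : s ^ 2 = 1 + z ^ 2 := aux_sq_sqrt _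
  have hmul : (z + s) * (s - z) = 1 := by linear_combination hsq
  have hne : z + s ≠ 0 := by
    intro h
    rw [h, zero_mul] at hmul
    exact zero_ne_one hmul
  have hinv : (z + s)⁻¹ = s - z := inv_eq_of_mul_eq_one_right hmul
  have hdef : Complex.sinh (Complex.log (z + s)) =
      (Complex.exp (Complex.log (z + s)) - Complex.exp (-(Complex.log (z + s)))) / 2 := rfl
  rw [hdef, Complex.exp_neg, Complex.exp_log hne, hinv]
  ring

lemma aux_sinh_re_im (w : ℂ) :
    Complex.sinh w = (Real.sinh w.re * Real.cos w.im : ℝ) +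
      (Real.cosh w.re * Real.sin w.im : ℝ) * I := by
  conv_lhs => rw [← Complex.re_add_im w]
  rw [Complex.sinh_add, Complex.sinh_mul_I, Complex.cosh_mul_I]
  push_cast [Complex.ofReal_sinh, Complex.ofReal_cosh, Complex.ofReal_sin, Complex.ofReal_cos]
  ring

lemma aux_cosh_re_im (w : ℂ) :
    Complex.cosh w = (Real.cosh w.re * Real.cos w.im : ℝ) +
      (Real.sinh w.re * Real.sin w.im : ℝ) * I := by
  conv_lhs => rw [← Complex.re_add_im w]
  rw [Complex.cosh_add, Complex.sinh_mul_I, Complex.cosh_mul_I]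
  push_cast [Complex.ofReal_sinh, Complex.ofReal_cosh, Complex.ofReal_sin, Complex.ofReal_cos]
  ring

lemma aux_abs_sinh_lt_one_iff (w : ℂ) :
    ‖Complex.sinh w‖ < 1 ↔
      Real.sinh w.re ^ 2 + Real.sin w.im ^ 2 < 1 := by
  have hre : (Complex.sinh w).re = Real.sinh w.re * Real.cos w.im := by
    rw [aux_sinh_re_im]
    simp [Complex.sinh_ofReal_re, Complex.cos_ofReal_re, Complex.sin_ofReal_re,
      Complex.cosh_ofReal_re]
  have him : (Complex.sinh w).im = Real.cosh w.re * Real.sin w.im := by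
    rw [aux_sinh_re_im]
    simp [Complex.sinh_ofReal_re, Complex.cos_ofReal_re, Complex.sin_ofReal_re,
      Complex.cosh_ofReal_re]
  have hsq : ‖Complex.sinh w‖ ^ 2 =
      Real.sinh w.re ^ 2 + Real.sin w.im ^ 2 := by
    rw [Complex.sq_norm, Complex.normSq_apply, hre, him]
    have h1 : Real.cos w.im ^ 2 = 1 - Real.sin w.im ^ 2 := by
      have := Real.sin_sq_add_cos_sq w.im; linarith
    have h2 : Real.cosh w.re ^ 2 = Real.sinh w.re ^ 2 + 1 := Real.cosh_sq _
    nlinarith [h1, h2]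
  constructor
  · intro h
    rw [← hsq]
    nlinarith [norm_nonneg (Complex.sinh w)]
  · intro h
    rw [← hsq] at h
    nlinarith [norm_nonneg (Complex.sinh w)]

/-- The target region. -/
def Sreg : Set ℂ := {w : ℂ | |w.im| < Real.pi / 2 ∧ ‖Complex.sinh w‖ < 1}

lemma aux_mem_Sreg_iff (w : ℂ) :
    w ∈ Sreg ↔ |w.im| < Real.pi / 2 ∧ |Real.sinh w.re| < Real.cos w.im := by
  constructor
  · rintro ⟨h1, h2⟩
    refine ⟨h1, ?_⟩
    rw [aux_abs_sinh_lt_one_iff] at h2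
    have hc : 0 < Real.cos w.im := by
      apply Real.cos_pos_of_mem_Ioo
      rw [Set.mem_Ioo, ← abs_lt]
      exact h1
    have hsc := Real.sin_sq_add_cos_sq w.im
    nlinarith [_root_.sq_abs (Real.sinh w.re), abs_nonneg (Real.sinh w.re)]
  · rintro ⟨h1, h2⟩
    refine ⟨h1, ?_⟩
    rw [aux_abs_sinh_lt_one_iff]
    have hsc := Real.sin_sq_add_cos_sq w.im
    nlinarith [_root_.sq_abs (Real.sinh w.re), abs_nonneg (Real.sinh w.re)]

lemma aux_re_add_sqrt_pos {z : ℂ} (hz : ‖z‖ < 1) :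
    0 < (z + (1 + z ^ 2) ^ ((1 : ℂ) / 2)).re := by
  have h2 : ((1 : ℂ) / 2) = (2⁻¹ : ℂ) := by norm_num
  have hres : ((1 + z ^ 2) ^ ((1 : ℂ) / 2)).re =
      Real.sqrt ((‖1 + z ^ 2‖ + (1 + z ^ 2).re) / 2) := by
    rw [h2, Complex.cpow_inv_two_re]
  have habs1 : (1 : ℝ) ≤ ‖1 + z ^ 2‖ + ‖z‖ ^ 2 := by
    have h := norm_add_le (1 + z ^ 2) (-(z ^ 2))
    simp only [add_neg_cancel_right] at h
    rw [norm_one] at h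
    simpa [map_neg, map_pow] using h
  have habssq : ‖z‖ ^ 2 = z.re ^ 2 + z.im ^ 2 := by
    rw [Complex.sq_norm, Complex.normSq_apply]; ring
  have hre2 : (1 + z ^ 2).re = 1 + (z.re ^ 2 - z.im ^ 2) := by
    simp [pow_two, Complex.add_re, Complex.mul_re]
  have hlt : |z.re| < Real.sqrt ((‖1 + z ^ 2‖ + (1 + z ^ 2).re) / 2) := by
    rw [Real.lt_sqrt (abs_nonneg _)]
    rw [_root_.sq_abs, hre2]
    have hz2 : ‖z‖ ^ 2 < 1 := by
      nlinarith [norm_nonneg z]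
    nlinarith [habs1, habssq]
  rw [Complex.add_re, hres]
  have := neg_abs_le z.re
  linarith

lemma aux_carcsinh_mem {z : ℂ} (hz : ‖z‖ < 1) : carcsinh z ∈ Sreg := by
  constructor
  · have him : (carcsinh z).im = Complex.arg (z + (1 + z ^ 2) ^ ((1 : ℂ) / 2)) := by
      rw [carcsinh, Complex.log_im]
    rw [him, Complex.abs_arg_lt_pi_div_two_iff]
    exact Or.inl (aux_re_add_sqrt_pos hz)
  · rw [aux_sinh_carcsinh]
    exact hz

lemma aux_carcsinh_sinh {w : ℂ} (hw : w ∈ Sreg) : carcsinh (Complex.sinh w) = w := by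
  obtain ⟨h1, _⟩ := hw
  have hcos : 0 < Real.cos w.im := by
    apply Real.cos_pos_of_mem_Ioo
    rw [Set.mem_Ioo, ← abs_lt]
    exact h1
  have hcoshre : 0 < (Complex.cosh w).re := by
    have : (Complex.cosh w).re = Real.cosh w.re * Real.cos w.im := by
      rw [aux_cosh_re_im]
      simp [Complex.sinh_ofReal_re, Complex.cos_ofReal_re, Complex.sin_ofReal_re,
        Complex.cosh_ofReal_re]
    rw [this]
    exact mul_pos (Real.cosh_pos _) hcos
  have hsq : 1 + Complex.sinh w ^ 2 = Complex.cosh w ^ 2 := by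
    rw [Complex.cosh_sq]; ring
  have hsqrt : (1 + Complex.sinh w ^ 2) ^ ((1 : ℂ) / 2) = Complex.cosh w := by
    rw [hsq, show ((1 : ℂ) / 2) = (2⁻¹ : ℂ) by norm_num]
    exact Complex.sq_cpow_two_inv hcoshre
  rw [carcsinh, hsqrt, Complex.sinh_add_cosh]
  have hpi : Real.pi / 2 < Real.pi := by linarith [Real.pi_pos]
  rw [abs_lt] at h1
  exact Complex.log_exp (by linarith) (by linarith)

lemma aux_convexOn_sinh : ConvexOn ℝ (Set.Ici (0 : ℝ)) Real.sinh := by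
  apply convexOn_of_deriv2_nonneg (convex_Ici 0) Real.continuous_sinh.continuousOn
    Real.differentiable_sinh.differentiableOn
  · rw [Real.deriv_sinh]
    exact Real.differentiable_cosh.differentiableOn
  · intro x hx
    rw [interior_Ici, Set.mem_Ioi] at hx
    have : deriv^[2] Real.sinh = Real.sinh := by
      show deriv (deriv Real.sinh) = Real.sinh
      rw [Real.deriv_sinh, Real.deriv_cosh]
    rw [this]
    exact (Real.sinh_pos_iff.2 hx).le

lemma aux_convex_Sreg : Convex ℝ Sreg := by
  intro p hp q hq a b ha hb hab
  rw [aux_mem_Sreg_iff] at hp hq ⊢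
  obtain ⟨hp1, hp2⟩ := hp
  obtain ⟨hq1, hq2⟩ := hq
  have hre : (a • p + b • q).re = a * p.re + b * q.re := by
    simp [Complex.add_re, Complex.smul_re]
  have him : (a • p + b • q).im = a * p.im + b * q.im := by
    simp [Complex.add_im, Complex.smul_im]
  constructor
  · rw [him]
    calc |a * p.im + b * q.im| ≤ a * |p.im| + b * |q.im| := by
          calc |a * p.im + b * q.im| ≤ |a * p.im| + |b * q.im| := abs_add_le _ _
          _ = a * |p.im| + b * |q.im| := by
              rw [abs_mul, abs_mul, _root_.abs_of_nonneg ha, _root_.abs_of_nonneg hb]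
      _ < Real.pi / 2 := by
          have key : a * (Real.pi / 2) + b * (Real.pi / 2) = Real.pi / 2 := by
            rw [← add_mul, hab, one_mul]
          rcases ha.lt_or_eq with ha' | ha'
          · have t1 := mul_lt_mul_of_pos_left hp1 ha'
            have t2 := mul_le_mul_of_nonneg_left hq1.le hb
            linarith
          · have hb1 : b = 1 := by linarith
            rw [← ha', hb1]; simpa using hq1
  · rw [hre, him]
    -- memberships in Icc for cosine concavity
    have hpIcc : p.im ∈ Set.Icc (-(Real.pi / 2)) (Real.pi / 2) := by
      rw [abs_lt] at hp1; exact ⟨hp1.1.le, hp1.2.le⟩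
    have hqIcc : q.im ∈ Set.Icc (-(Real.pi / 2)) (Real.pi / 2) := by
      rw [abs_lt] at hq1; exact ⟨hq1.1.le, hq1.2.le⟩
    have hcos : a * Real.cos p.im + b * Real.cos q.im ≤ Real.cos (a * p.im + b * q.im) := by
      have := strictConcaveOn_cos_Icc.concaveOn.2 hpIcc hqIcc ha hb hab
      simpa [smul_eq_mul] using this
    have h1 : |Real.sinh (a * p.re + b * q.re)| = Real.sinh |a * p.re + b * q.re| :=
      Real.abs_sinh _
    have h2 : Real.sinh |a * p.re + b * q.re| ≤ Real.sinh (a * |p.re| + b * |q.re|) := by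
      rw [Real.sinh_le_sinh]
      calc |a * p.re + b * q.re| ≤ |a * p.re| + |b * q.re| := abs_add_le _ _
        _ = a * |p.re| + b * |q.re| := by
            rw [abs_mul, abs_mul, _root_.abs_of_nonneg ha, _root_.abs_of_nonneg hb]
    have h3 : Real.sinh (a * |p.re| + b * |q.re|) ≤
        a * Real.sinh |p.re| + b * Real.sinh |q.re| := by
      have := aux_convexOn_sinh.2 (Set.mem_Ici.2 (abs_nonneg p.re))
        (Set.mem_Ici.2 (abs_nonneg q.re)) ha hb hab
      simpa [smul_eq_mul] using this
    have h4p : Real.sinh |p.re| = |Real.sinh p.re| := (Real.abs_sinh _).symm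
    have h4q : Real.sinh |q.re| = |Real.sinh q.re| := (Real.abs_sinh _).symm
    have h5 : a * |Real.sinh p.re| + b * |Real.sinh q.re| <
        a * Real.cos p.im + b * Real.cos q.im := by
      rcases ha.lt_or_eq with ha' | ha'
      · exact add_lt_add_of_lt_of_le (mul_lt_mul_of_pos_left hp2 ha')
          (mul_le_mul_of_nonneg_left hq2.le hb)
      · have hb1 : b = 1 := by linarith
        rw [← ha', hb1]; simpa using hq2
    calc |Real.sinh (a * p.re + b * q.re)| ≤ a * Real.sinh |p.re| + b * Real.sinh |q.re| := by
          rw [h1]; exact le_trans h2 h3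
      _ = a * |Real.sinh p.re| + b * |Real.sinh q.re| := by rw [h4p, h4q]
      _ < a * Real.cos p.im + b * Real.cos q.im := h5
      _ ≤ Real.cos (a * p.im + b * q.im) := hcos

lemma aux_image : carcsinh '' unitDisk = Sreg := by
  apply Set.Subset.antisymm
  · rintro _ ⟨z, hz, rfl⟩
    exact aux_carcsinh_mem hz
  · intro w hw
    refine ⟨Complex.sinh w, hw.2, aux_carcsinh_sinh hw⟩

/-- `ρ(z) = 1 + arcsinh z` is convex univalent on the unit disk: it is injective
on `𝔻` and its image `Ω_ρ = ρ '' 𝔻` is a convex subset of `ℂ`. -/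
theorem rho_injOn_and_image_convex :
    Set.InjOn ρ unitDisk ∧ Convex ℝ (ρ '' unitDisk) := by
  constructor
  · intro x _ y _ h
    have hc : carcsinh x = carcsinh y := by
      have := h
      rw [ρ, ρ] at this
      exact add_left_cancel this
    calc x = Complex.sinh (carcsinh x) := (aux_sinh_carcsinh x).symm
      _ = Complex.sinh (carcsinh y) := by rw [hc]
      _ = y := aux_sinh_carcsinh y
  · have himg : ρ '' unitDisk = (fun w => (1 : ℂ) + w) '' Sreg := by
      rw [← aux_image]
      ext x
      simp only [Set.mem_image, ρ]
      constructor
      · rintro ⟨z, hz, rfl⟩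
        exact ⟨carcsinh z, ⟨z, hz, rfl⟩, rfl⟩
      · rintro ⟨w, ⟨z, hz, rfl⟩, rfl⟩
        exact ⟨z, hz, rfl⟩
    rw [himg]
    exact aux_convex_Sreg.translate 1
end

section
/- For every 0 < r < 1, the closed disk {w ∈ ℂ : |w - 1| ≤ arcsinh(r)} (with arcsinh(r) = Real.arsinh r) is contained in the image ρ '' {z ∈ ℂ : |z| ≤ r} of the closed disk of radius r under ρ. -/
open Complex

/-!
A point `w` of the disk is hit by `z = sinh (w - 1)`. Comparing power series termwise gives
`‖sinh u‖ ≤ sinh ‖u‖`, so `‖z‖ ≤ sinh (arsinh r) = r`. Since `arsinh r < 1 < π / 2`, the point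
`w - 1` lies in the strip `|Im u| < π / 2`, where `cosh u` has positive real part; there the
principal square root of `1 + sinh² u` is `cosh u`, and `carcsinh (sinh u) = log (exp u) = u`.
-/

theorem Complex.norm_sinh_le_sinh_norm (z : ℂ) : ‖sinh z‖ ≤ Real.sinh ‖z‖ :=
  (hasSum_sinh z).norm_le_of_bounded (Real.hasSum_sinh ‖z‖) fun n => by
    rw [norm_div, norm_pow, Complex.norm_natCast]

theorem Complex.cosh_re (z : ℂ) : (cosh z).re = Real.cosh z.re * Real.cos z.im := by
  simp only [cosh, div_ofNat_re, add_re, exp_re, neg_re, neg_im, Real.cos_neg, Real.cosh_eq]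
  ring

theorem carcsinh_sinh {u : ℂ} (hu : |u.im| < Real.pi / 2) : carcsinh (sinh u) = u := by
  obtain ⟨hlo, hhi⟩ := abs_lt.1 hu
  have hcosh : 0 < (cosh u).re := by
    rw [cosh_re]
    exact mul_pos (Real.cosh_pos _) (Real.cos_pos_of_mem_Ioo ⟨hlo, hhi⟩)
  have hsqrt : (1 + sinh u ^ 2) ^ ((1 : ℂ) / 2) = cosh u := by
    rw [add_comm, ← cosh_sq, one_div]
    exact_mod_cast sq_cpow_two_inv hcosh
  rw [carcsinh, hsqrt, sinh_add_cosh, log_exp] <;> linarith [Real.pi_pos]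

theorem Real.arsinh_lt_one {r : ℝ} (hr : r < 1) : Real.arsinh r < 1 := by
  simpa using Real.arsinh_lt_arsinh.2 (hr.trans (Real.self_lt_sinh_iff.2 one_pos))

theorem closedDisk_subset_rho_image_general (r : ℝ) (hr1 : r < 1) :
    {w : ℂ | ‖w - 1‖ ≤ Real.arsinh r} ⊆
      ρ '' {z : ℂ | ‖z‖ ≤ r} := by
  intro w (hw : ‖w - 1‖ ≤ Real.arsinh r)
  have him : |(w - 1).im| < Real.pi / 2 := calc
    |(w - 1).im| ≤ ‖w - 1‖ := abs_im_le_norm _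
    _ < 1 := hw.trans_lt (Real.arsinh_lt_one hr1)
    _ < Real.pi / 2 := by linarith [Real.pi_gt_three]
  refine ⟨sinh (w - 1), ?_, ?_⟩
  · calc ‖sinh (w - 1)‖ ≤ Real.sinh ‖w - 1‖ := norm_sinh_le_sinh_norm _
      _ ≤ Real.sinh (Real.arsinh r) := Real.sinh_le_sinh.2 hw
      _ = r := Real.sinh_arsinh r
  · rw [ρ, carcsinh_sinh him]
    ring

/-- For `0 < r < 1`, the closed disk `{w : |w - 1| ≤ arcsinh r}` is contained in the
image under `ρ` of the closed disk of radius `r`. -/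
theorem closedDisk_subset_rho_image (r : ℝ) (hr0 : 0 < r) (hr1 : r < 1) :
    {w : ℂ | ‖w - 1‖ ≤ Real.arsinh r} ⊆
      ρ '' {z : ℂ | ‖z‖ ≤ r} :=
  closedDisk_subset_rho_image_general r hr1
end

section
/- For every 0 ≤ r < 1 and every z ∈ ℂ with |z| ≤ r, the real part of ρ(z) satisfies 1 - arcsinh(r) ≤ Re(ρ(z)) ≤ 1 + arcsinh(r), where arcsinh(r) = Real.arsinh r. -/
open Complex

/-!
With `s` any square root of `1 + z²`, the numbers `z + s` and `s - z` are reciprocal, and both have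
modulus at most `‖z‖ + √(1 + ‖z‖²) = exp (arsinh ‖z‖)`. Hence `|log ‖z + s‖| ≤ arsinh ‖z‖`, and
`Re (carcsinh z) = log ‖z + s‖` for the principal root `s`.
-/

section SqrtOneAddSq

variable {z s : ℂ}

theorem norm_le_sqrt_one_add_sq_of_sq_eq (hs : s ^ 2 = 1 + z ^ 2) : ‖s‖ ≤ √(1 + ‖z‖ ^ 2) := by
  rw [← Real.sqrt_sq (norm_nonneg s), ← norm_pow, hs]
  gcongr
  exact (norm_add_le _ _).trans_eq (by rw [norm_one, norm_pow])

theorem norm_add_le_exp_arsinh_of_sq_eq (hs : s ^ 2 = 1 + z ^ 2) :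
    ‖z + s‖ ≤ Real.exp (Real.arsinh ‖z‖) := by
  rw [Real.exp_arsinh]
  exact (norm_add_le z s).trans (add_le_add_right (norm_le_sqrt_one_add_sq_of_sq_eq hs) _)

theorem add_mul_sub_eq_one_of_sq_eq (hs : s ^ 2 = 1 + z ^ 2) : (z + s) * (s - z) = 1 := by
  linear_combination hs

theorem log_norm_add_le_arsinh_of_sq_eq (hs : s ^ 2 = 1 + z ^ 2) :
    Real.log ‖z + s‖ ≤ Real.arsinh ‖z‖ := by
  have hne : z + s ≠ 0 := left_ne_zero_of_mul_eq_one (add_mul_sub_eq_one_of_sq_eq hs)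
  rw [Real.log_le_iff_le_exp (norm_pos_iff.mpr hne)]
  exact norm_add_le_exp_arsinh_of_sq_eq hs

theorem abs_log_norm_add_le_arsinh_of_sq_eq (hs : s ^ 2 = 1 + z ^ 2) :
    |Real.log ‖z + s‖| ≤ Real.arsinh ‖z‖ := by
  have hs' : s ^ 2 = 1 + (-z) ^ 2 := by rw [hs, neg_sq]
  have hsum : Real.log ‖z + s‖ + Real.log ‖s - z‖ = 0 := by
    have hprod := add_mul_sub_eq_one_of_sq_eq hs
    rw [← Real.log_mul (norm_ne_zero_iff.mpr (left_ne_zero_of_mul_eq_one hprod))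
      (norm_ne_zero_iff.mpr (right_ne_zero_of_mul_eq_one hprod)), ← norm_mul, hprod,
      norm_one, Real.log_one]
  have hsub : Real.log ‖s - z‖ ≤ Real.arsinh ‖z‖ := by
    simpa only [norm_neg, neg_add_eq_sub] using log_norm_add_le_arsinh_of_sq_eq hs'
  rw [abs_le]
  constructor <;> linarith [log_norm_add_le_arsinh_of_sq_eq hs]

end SqrtOneAddSq

theorem abs_re_carcsinh_le (z : ℂ) : |(carcsinh z).re| ≤ Real.arsinh ‖z‖ := by
  have hs : ((1 + z ^ 2) ^ ((1 : ℂ) / 2)) ^ 2 = 1 + z ^ 2 := by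
    rw [one_div]; exact cpow_ofNat_inv_pow _ 2
  rw [carcsinh, log_re]
  exact abs_log_norm_add_le_arsinh_of_sq_eq hs

theorem re_rho_bounds_general (r : ℝ)
    (z : ℂ) (hz : ‖z‖ ≤ r) :
    1 - Real.arsinh r ≤ (ρ z).re ∧ (ρ z).re ≤ 1 + Real.arsinh r := by
  have hle : |(carcsinh z).re| ≤ Real.arsinh r :=
    (abs_re_carcsinh_le z).trans (Real.arsinh_le_arsinh.mpr hz)
  have hre : (ρ z).re = 1 + (carcsinh z).re := by simp [ρ]
  rw [hre]
  constructor <;> linarith [abs_le.mp hle]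

/-- For `0 ≤ r < 1` and `|z| ≤ r`, one has `1 - arcsinh r ≤ Re (ρ z) ≤ 1 + arcsinh r`. -/
theorem re_rho_bounds (r : ℝ) (hr0 : 0 ≤ r) (hr1 : r < 1)
    (z : ℂ) (hz : ‖z‖ ≤ r) :
    1 - Real.arsinh r ≤ (ρ z).re ∧ (ρ z).re ≤ 1 + Real.arsinh r :=
  re_rho_bounds_general r z hz
end

section
/- Let 1 - arcsinh(1) < a < 1 + arcsinh(1) be real (arcsinh(1) = Real.arsinh 1) and define r_a := a - (1 - arcsinh(1)) if a ≤ 1 and r_a := 1 + arcsinh(1) - a if a ≥ 1. Then the open disk {w ∈ ℂ : |w - a| < r_a} is contained in Ω_ρ = ρ '' 𝔻. -/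
open Complex

/-- The petal-shaped domain `Ω_ρ = ρ '' 𝔻`. -/
noncomputable def OmegaRho : Set ℂ := ρ '' unitDisk

theorem Complex.norm_sinh_lt_one {z : ℂ} (hz : ‖z‖ < Real.arsinh 1) : ‖sinh z‖ < 1 :=
  calc ‖sinh z‖ ≤ Real.sinh ‖z‖ := z.norm_sinh_le_sinh_norm
    _ < Real.sinh (Real.arsinh 1) := Real.sinh_lt_sinh.2 hz
    _ = 1 := Real.sinh_arsinh 1

theorem Complex.sq_cpow_half {w : ℂ} (hw : 0 < w.re) : (w ^ 2) ^ ((1 : ℂ) / 2) = w := by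
  have harg : |w.arg| < Real.pi / 2 := abs_arg_lt_pi_div_two_iff.2 (Or.inl hw)
  rw [one_div]
  exact pow_cpow_ofNat_inv (abs_lt.1 harg).1 (abs_lt.1 harg).2.le

theorem carcsinh_sinh_s6 {z : ℂ} (hz : |z.im| < Real.pi / 2) : carcsinh (sinh z) = z := by
  obtain ⟨hlo, hhi⟩ := abs_lt.1 hz
  have hcosh : 0 < (cosh z).re := by
    rw [cosh_re]
    exact mul_pos (Real.cosh_pos _) (Real.cos_pos_of_mem_Ioo ⟨hlo, hhi⟩)
  have hsqrt : (1 + sinh z ^ 2) ^ ((1 : ℂ) / 2) = cosh z := by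
    rw [add_comm, ← cosh_sq, Complex.sq_cpow_half hcosh]
  rw [carcsinh, hsqrt, sinh_add_cosh]
  exact log_exp (by linarith [Real.pi_pos]) (by linarith [Real.pi_pos])

theorem Real.arsinh_one_lt_pi_div_two : Real.arsinh 1 < Real.pi / 2 :=
  calc Real.arsinh 1 < Real.arsinh (Real.sinh 1) :=
        Real.arsinh_lt_arsinh.2 (Real.self_lt_sinh_iff.2 one_pos)
    _ = 1 := Real.arsinh_sinh 1
    _ < Real.pi / 2 := by linarith [Real.pi_gt_three]

theorem ball_one_arsinh_one_subset_OmegaRho : Metric.ball 1 (Real.arsinh 1) ⊆ OmegaRho := by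
  intro w hw
  have hz : ‖w - 1‖ < Real.arsinh 1 := by rwa [← dist_eq_norm]
  have him : |(w - 1).im| < Real.pi / 2 :=
    ((abs_im_le_norm _).trans_lt hz).trans Real.arsinh_one_lt_pi_div_two
  refine ⟨sinh (w - 1), norm_sinh_lt_one hz, ?_⟩
  rw [ρ, carcsinh_sinh_s6 him, add_sub_cancel]

theorem disk_subset_OmegaRho_general (a : ℝ) :
    {w : ℂ | ‖w - (a : ℂ)‖ <
      (if a ≤ 1 then a - (1 - Real.arsinh 1) else 1 + Real.arsinh 1 - a)} ⊆ OmegaRho := by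
  have hradius : (if a ≤ 1 then a - (1 - Real.arsinh 1) else 1 + Real.arsinh 1 - a)
      = Real.arsinh 1 - dist (a : ℂ) 1 := by
    rw [dist_eq_norm, ← ofReal_one, ← ofReal_sub, norm_real, Real.norm_eq_abs]
    split_ifs with ha
    · rw [abs_of_nonpos (by linarith)]; ring
    · rw [abs_of_pos (by linarith)]; ring
  calc _ = Metric.ball (a : ℂ) (Real.arsinh 1 - dist (a : ℂ) 1) := by
        ext w; rw [hradius, Metric.mem_ball, dist_eq_norm w]; rfl
    _ ⊆ Metric.ball 1 (Real.arsinh 1) := Metric.ball_subset_ball' (sub_add_cancel _ _).le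
    _ ⊆ OmegaRho := ball_one_arsinh_one_subset_OmegaRho

/-- For `1 - arcsinh 1 < a < 1 + arcsinh 1`, the open disk centered at `a` of radius
`r_a` (with `r_a = a - (1 - arcsinh 1)` if `a ≤ 1`, and `r_a = 1 + arcsinh 1 - a`
if `a ≥ 1`) is contained in `Ω_ρ`. -/
theorem disk_subset_OmegaRho (a : ℝ)
    (h1 : 1 - Real.arsinh 1 < a) (h2 : a < 1 + Real.arsinh 1) :
    {w : ℂ | ‖w - (a : ℂ)‖ <
      (if a ≤ 1 then a - (1 - Real.arsinh 1) else 1 + Real.arsinh 1 - a)} ⊆ OmegaRho :=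
  disk_subset_OmegaRho_general a
end

section
/- The domain Ω_ρ = ρ(𝔻) is contained in the open disk {w ∈ ℂ : |w - 1| < π/2}; equivalently, |arcsinh(z)| < π/2 for every z ∈ 𝔻. -/
open Complex

/-!
Write `w = arcsinh z`, so that `sinh w = z`. Since `(z + √(1+z²)) (√(1+z²) - z) = 1` and the
principal square root has nonnegative real part, both factors have nonnegative real part, hence
`|Im w| ≤ π/2`. Then `‖sinh w‖² = sinh² (Re w) + sin² (Im w) ≥ (Re w)² + (2 Im w / π)² ≥ 4‖w‖²/π²`
by `x ≤ sinh x` and Jordan's inequality, so `‖w‖ ≥ π/2` would force `‖z‖ ≥ 1`.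
-/

theorem Complex.sq_norm_sinh (w : ℂ) :
    ‖sinh w‖ ^ 2 = Real.sinh w.re ^ 2 + Real.sin w.im ^ 2 := by
  have hw : sinh w =
      (Real.sinh w.re * Real.cos w.im : ℝ) + (Real.cosh w.re * Real.sin w.im : ℝ) * I := by
    conv_lhs => rw [← re_add_im w]
    rw [sinh_add, sinh_mul_I, cosh_mul_I]
    push_cast
    ring
  rw [hw, Complex.sq_norm, normSq_add_mul_I]
  nlinarith [Real.cosh_sq' w.re, Real.sin_sq_add_cos_sq w.im]

theorem Complex.re_cpow_one_half_nonneg (w : ℂ) : 0 ≤ (w ^ ((1 : ℂ) / 2)).re := by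
  rw [one_div, cpow_inv_two_re]
  exact Real.sqrt_nonneg _

theorem Complex.re_nonneg_of_mul_eq_one {a b : ℂ} (hab : a * b = 1) (h : 0 ≤ (a + b).re) :
    0 ≤ a.re := by
  have hb : b = a⁻¹ := eq_inv_of_mul_eq_one_right hab
  rw [hb, add_re, inv_re] at h
  by_contra! ha
  have : a.re / normSq a ≤ 0 := div_nonpos_of_nonpos_of_nonneg ha.le (normSq_nonneg a)
  linarith

theorem Complex.one_le_norm_sinh {w : ℂ} (him : |w.im| ≤ Real.pi / 2) (hw : Real.pi / 2 ≤ ‖w‖) :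
    1 ≤ ‖sinh w‖ := by
  have hre : w.re ^ 2 ≤ Real.sinh w.re ^ 2 := by
    rw [sq_le_sq, Real.abs_sinh]
    exact Real.self_le_sinh_iff.mpr (abs_nonneg _)
  have him' : (2 / Real.pi * |w.im|) ^ 2 ≤ Real.sin w.im ^ 2 := by
    rw [← sq_abs (Real.sin _)]
    exact pow_le_pow_left₀ (by positivity) (Real.mul_abs_le_abs_sin him) 2
  have hpi : 4 / Real.pi ^ 2 ≤ 1 := by
    rw [div_le_one (by positivity)]
    nlinarith [Real.two_le_pi]
  have hnorm : ‖w‖ ^ 2 = w.re ^ 2 + w.im ^ 2 := by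
    rw [Complex.sq_norm, normSq_apply]; ring
  have hsq : 1 ≤ ‖sinh w‖ ^ 2 := calc
    1 = 4 / Real.pi ^ 2 * (Real.pi / 2) ^ 2 := by field_simp; norm_num
    _ ≤ 4 / Real.pi ^ 2 * ‖w‖ ^ 2 := by gcongr
    _ = 4 / Real.pi ^ 2 * w.re ^ 2 + (2 / Real.pi * |w.im|) ^ 2 := by
        rw [hnorm, mul_pow, sq_abs]; ring
    _ ≤ w.re ^ 2 + (2 / Real.pi * |w.im|) ^ 2 := by
        gcongr; exact mul_le_of_le_one_left (sq_nonneg _) hpi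
    _ ≤ Real.sinh w.re ^ 2 + Real.sin w.im ^ 2 := add_le_add hre him'
    _ = ‖sinh w‖ ^ 2 := (Complex.sq_norm_sinh w).symm
  exact (one_le_sq_iff₀ (norm_nonneg _)).mp hsq

theorem add_sqrt_one_add_sq_mul_sqrt_sub (z : ℂ) :
    (z + (1 + z ^ 2) ^ ((1 : ℂ) / 2)) * ((1 + z ^ 2) ^ ((1 : ℂ) / 2) - z) = 1 := by
  have hsq : ((1 + z ^ 2) ^ ((1 : ℂ) / 2)) ^ 2 = 1 + z ^ 2 := by
    rw [one_div, cpow_ofNat_inv_pow]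
  linear_combination hsq

theorem sinh_carcsinh (z : ℂ) : sinh (carcsinh z) = z := by
  have h := add_sqrt_one_add_sq_mul_sqrt_sub z
  rw [carcsinh, sinh, exp_neg, exp_log (left_ne_zero_of_mul_eq_one h),
    ← eq_inv_of_mul_eq_one_right h]
  ring

theorem abs_im_carcsinh_le (z : ℂ) : |(carcsinh z).im| ≤ Real.pi / 2 := by
  rw [carcsinh, log_im, abs_arg_le_pi_div_two_iff]
  refine re_nonneg_of_mul_eq_one (add_sqrt_one_add_sq_mul_sqrt_sub z) ?_
  rw [add_re, add_re, sub_re]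
  linarith [re_cpow_one_half_nonneg (1 + z ^ 2)]

theorem norm_carcsinh_lt {z : ℂ} (hz : ‖z‖ < 1) : ‖carcsinh z‖ < Real.pi / 2 := by
  by_contra! h
  have := one_le_norm_sinh (abs_im_carcsinh_le z) h
  rw [sinh_carcsinh] at this
  linarith

/-- `Ω_ρ` is contained in the open disk `{w : |w - 1| < π/2}`; equivalently,
`|arcsinh z| < π/2` for all `z ∈ 𝔻`. -/
theorem OmegaRho_subset_disk :
    OmegaRho ⊆ {w : ℂ | ‖w - 1‖ < Real.pi / 2} ∧
    ∀ z ∈ unitDisk, ‖carcsinh z‖ < Real.pi / 2 := by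
  refine ⟨?_, fun z hz => norm_carcsinh_lt hz⟩
  rintro _ ⟨z, hz, rfl⟩
  simpa [ρ] using norm_carcsinh_lt hz
end

section
/- If f ∈ S*_ρ, then for every z ∈ 𝔻 with z ≠ 0 one has f(z) ≠ 0 and 1 - arcsinh(1) < Re(z·f'(z)/f(z)) < 1 + arcsinh(1) (arcsinh(1) = Real.arsinh 1). In particular S*_ρ ⊂ S*_α (starlike of order α) for every 0 ≤ α ≤ 1 - arcsinh(1), and S*_ρ ⊂ M(β) = {f : Re(zf'/f) < β} for every β ≥ 1 + arcsinh(1). -/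
open Complex

/-- The class `S*_ρ`: analytic normalized functions with `z f'(z)/f(z)` subordinate to
`ρ(z) = 1 + arcsinh z` via a Schwarz function `ω`. -/
def SstarRho (f : ℂ → ℂ) : Prop :=
  AnalyticOnNhd ℂ f unitDisk ∧ f 0 = 0 ∧ deriv f 0 = 1 ∧
    ∃ ω : ℂ → ℂ, AnalyticOnNhd ℂ ω unitDisk ∧ ω 0 = 0 ∧
      (∀ z ∈ unitDisk, ‖ω z‖ ≤ ‖z‖) ∧
      ∀ z ∈ unitDisk, z * deriv f z = f z * ρ (ω z)

/-!
For `‖w‖ < 1` the principal root `s = (1 + w²)^(1/2)` satisfies `(w + s)(s - w) = 1` and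
`‖s‖ < √2`, so both factors have norm `< 1 + √2`; hence `Re (arcsinh w) = log ‖w + s‖` lies
strictly between `∓ log (1 + √2) = ∓ arsinh 1`. Since `z f'/f = ρ (ω z)` wherever `f ≠ 0`, it
remains to see that `f` has no zero `z₀ ≠ 0`: there `f'/f` would have a simple pole, whereas
`f'/f = ρ (ω z) / z` stays bounded near `z₀` because `ρ` is bounded on the disk.
-/

open Filter Topology Asymptotics

lemma Real.arsinh_one : Real.arsinh 1 = Real.log (1 + √2) := by
  norm_num [Real.arsinh]

lemma abs_log_norm_add_lt {w s : ℂ} (hw : ‖w‖ < 1) (hs : s ^ 2 = 1 + w ^ 2) :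
    |Real.log ‖w + s‖| < Real.log (1 + √2) := by
  have hsqrt : √2 ^ 2 = 2 := Real.sq_sqrt (by norm_num)
  have hs_lt : ‖s‖ < √2 := by
    have : ‖s‖ ^ 2 < √2 ^ 2 := by
      calc ‖s‖ ^ 2 = ‖1 + w ^ 2‖ := by rw [← norm_pow, hs]
        _ ≤ 1 + ‖w‖ ^ 2 := (norm_add_le _ _).trans_eq (by rw [norm_one, norm_pow])
        _ < √2 ^ 2 := by nlinarith [norm_nonneg w]
    exact lt_of_pow_lt_pow_left₀ 2 (Real.sqrt_nonneg 2) this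
  have hprod : ‖w + s‖ * ‖s - w‖ = 1 := by
    rw [← norm_mul, show (w + s) * (s - w) = 1 by linear_combination hs, norm_one]
  have hadd : ‖w + s‖ < 1 + √2 := (norm_add_le w s).trans_lt (by linarith)
  have hsub : ‖s - w‖ < 1 + √2 := (norm_sub_le s w).trans_lt (by linarith)
  have hadd_pos : 0 < ‖w + s‖ := pos_of_mul_pos_left (by rw [hprod]; exact one_pos) (norm_nonneg _)
  have hsub_pos : 0 < ‖s - w‖ := pos_of_mul_pos_right (by rw [hprod]; exact one_pos) (norm_nonneg _)
  have hlog : Real.log ‖w + s‖ = -Real.log ‖s - w‖ := by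
    rw [eq_neg_iff_add_eq_zero, ← Real.log_mul hadd_pos.ne' hsub_pos.ne', hprod, Real.log_one]
  rw [abs_lt]
  constructor
  · rw [hlog, neg_lt_neg_iff]; exact Real.log_lt_log hsub_pos hsub
  · exact Real.log_lt_log hadd_pos hadd

lemma abs_re_carcsinh_lt {w : ℂ} (hw : ‖w‖ < 1) : |(carcsinh w).re| < Real.arsinh 1 := by
  rw [carcsinh, log_re, Real.arsinh_one, one_div]
  exact abs_log_norm_add_lt hw (cpow_nat_inv_pow _ two_ne_zero)

lemma norm_ρ_le {w : ℂ} (hw : ‖w‖ < 1) : ‖ρ w‖ ≤ 1 + Real.arsinh 1 + Real.pi := by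
  have him : |(carcsinh w).im| ≤ Real.pi := by
    rw [carcsinh, log_im]; exact abs_arg_le_pi _
  calc ‖ρ w‖ ≤ ‖(1 : ℂ)‖ + ‖carcsinh w‖ := norm_add_le _ _
    _ ≤ 1 + (|(carcsinh w).re| + |(carcsinh w).im|) := by
      rw [norm_one]; gcongr; exact norm_le_abs_re_add_abs_im _
    _ ≤ 1 + Real.arsinh 1 + Real.pi := by linarith [(abs_re_carcsinh_lt hw).le]

section

variable {𝕜 : Type*} [NontriviallyNormedField 𝕜] [CompleteSpace 𝕜] [CharZero 𝕜]

theorem AnalyticAt.analyticOrderAt_eq_top_of_logDeriv_isBigO_one {f : 𝕜 → 𝕜} {x : 𝕜}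
    (hf : AnalyticAt 𝕜 f x) (hfx : f x = 0)
    (hbdd : logDeriv f =O[𝓝[≠] x] (fun _ ↦ (1 : 𝕜))) : analyticOrderAt f x = ⊤ := by
  by_contra hfin
  have hpos : 0 < meromorphicOrderAt f x := by
    rw [← tendsto_zero_iff_meromorphicOrderAt_pos hf.meromorphicAt, ← hfx]
    exact hf.continuousAt.continuousWithinAt.tendsto
  have hlog : meromorphicOrderAt (logDeriv f) x = -1 :=
    meromorphicOrderAt_logDeriv_eq_neg_one hf.meromorphicAt hpos.ne'
      (by simpa [hf.meromorphicOrderAt_eq] using hfin)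
  have hinf := tendsto_cobounded_of_meromorphicOrderAt_neg (f := logDeriv f) (by rw [hlog]; decide)
  rw [← tendsto_norm_atTop_iff_cobounded] at hinf
  exact not_isBoundedUnder_of_tendsto_atTop hinf ((isBigO_one_iff 𝕜).mp hbdd)

end

lemma unitDisk_eq_ball : unitDisk = Metric.ball 0 1 := by
  ext z; simp [unitDisk]

lemma isOpen_unitDisk : IsOpen unitDisk :=
  unitDisk_eq_ball ▸ Metric.isOpen_ball

lemma isPreconnected_unitDisk : IsPreconnected unitDisk :=
  unitDisk_eq_ball ▸ (convex_ball 0 1).isPreconnected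

lemma SstarRho.norm_mul_deriv_div_le {f : ℂ → ℂ} (hf : SstarRho f) {z : ℂ}
    (hz : z ∈ unitDisk) : ‖z * deriv f z / f z‖ ≤ 1 + Real.arsinh 1 + Real.pi := by
  obtain ⟨-, -, -, ω, -, -, hω, hsub⟩ := hf
  rcases eq_or_ne (f z) 0 with hfz | hfz
  · rw [hfz, div_zero, norm_zero]
    linarith [Real.arsinh_nonneg_iff.2 zero_le_one, Real.pi_pos]
  · rw [hsub z hz, mul_div_cancel_left₀ _ hfz]
    exact norm_ρ_le ((hω z hz).trans_lt hz)

theorem SstarRho.apply_ne_zero {f : ℂ → ℂ} (hf : SstarRho f) {z₀ : ℂ} (hz₀ : z₀ ∈ unitDisk)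
    (hne : z₀ ≠ 0) : f z₀ ≠ 0 := by
  obtain ⟨hfa, -, hderiv, -⟩ := id hf
  have horder : analyticOrderAt f 0 ≠ ⊤ := by
    rw [Ne, analyticOrderAt_eq_top]
    intro h
    have h' : f =ᶠ[𝓝 0] 0 := h
    simpa [hderiv] using h'.deriv_eq
  intro hfz
  refine hfa.analyticOrderAt_ne_top_of_isPreconnected isPreconnected_unitDisk
    (by simp [unitDisk]) hz₀ horder ?_
  refine (hfa z₀ hz₀).analyticOrderAt_eq_top_of_logDeriv_isBigO_one hfz ?_
  have hquot : (fun z ↦ z * deriv f z / f z) =O[𝓝 z₀] (fun _ ↦ (1 : ℂ)) :=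
    (isBigO_one_iff ℂ).2 <| isBoundedUnder_of_eventually_le <|
      eventually_of_mem (isOpen_unitDisk.mem_nhds hz₀) fun _ ↦ hf.norm_mul_deriv_div_le
  have hinv : (fun z : ℂ ↦ z⁻¹) =O[𝓝 z₀] (fun _ ↦ (1 : ℂ)) := (tendsto_inv₀ hne).isBigO_one ℂ
  refine ((hinv.mul hquot).mono nhdsWithin_le_nhds).congr' ?_ (by simp)
  filter_upwards [eventually_ne_nhdsWithin hne] with z hz
  rw [logDeriv_apply]
  field_simp

lemma SstarRho.abs_re_mul_deriv_div_sub_one_lt {f : ℂ → ℂ} (hf : SstarRho f) {z : ℂ}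
    (hz : z ∈ unitDisk) (hz0 : z ≠ 0) : |(z * deriv f z / f z).re - 1| < Real.arsinh 1 := by
  have hfz := hf.apply_ne_zero hz hz0
  obtain ⟨-, -, -, ω, -, -, hω, hsub⟩ := hf
  rw [hsub z hz, mul_div_cancel_left₀ _ hfz, ρ, add_re, one_re, add_sub_cancel_left]
  exact abs_re_carcsinh_lt ((hω z hz).trans_lt hz)

/-- If `f ∈ S*_ρ`, then `f z ≠ 0` and
`1 - arcsinh 1 < Re (z f'(z)/f(z)) < 1 + arcsinh 1` on the punctured disk; in
particular `S*_ρ ⊂ S*_α` for `0 ≤ α ≤ 1 - arcsinh 1`, and `S*_ρ ⊂ M(β)` for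
`β ≥ 1 + arcsinh 1`. -/
theorem SstarRho_re_bounds (f : ℂ → ℂ) (hf : SstarRho f) :
    (∀ z ∈ unitDisk, z ≠ 0 → f z ≠ 0 ∧
        1 - Real.arsinh 1 < (z * deriv f z / f z).re ∧
        (z * deriv f z / f z).re < 1 + Real.arsinh 1) ∧
    (∀ α : ℝ, 0 ≤ α → α ≤ 1 - Real.arsinh 1 →
        ∀ z ∈ unitDisk, z ≠ 0 → α < (z * deriv f z / f z).re) ∧
    (∀ β : ℝ, 1 + Real.arsinh 1 ≤ β →
        ∀ z ∈ unitDisk, z ≠ 0 → (z * deriv f z / f z).re < β) := by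
  have hre {z} (hz : z ∈ unitDisk) (hz0 : z ≠ 0) :=
    abs_lt.1 (hf.abs_re_mul_deriv_div_sub_one_lt hz hz0)
  refine ⟨fun z hz hz0 ↦ ⟨hf.apply_ne_zero hz hz0, ?_, ?_⟩, fun α _ hα z hz hz0 ↦ ?_,
    fun β hβ z hz hz0 ↦ ?_⟩ <;> linarith [hre hz hz0]
end
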